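/- arXiv:1601.04937 — 2 statements merged into one kernel-verified Lean document; each statement's English description precedes it below -/
import Mathlib

section
/- Let A, B, C be independent standard Gaussian random points in the plane (mean zero, identity covariance). The probability that the origin lies in the convex hull of {A, B, C} equals 1/4. -/
open MeasureTheory ProbabilityTheory

noncomputable def stdGaussian2 : Measure (EuclideanSpace ℝ (Fin 2)) :=
  (Measure.pi fun _ => gaussianReal 0 1).map (WithLp.toLp 2)

/-!
Almost surely any two of the three points are linearly independent, so `C = s • A + t • B`
with `s, t ≠ 0`, and the origin lies in the triangle exactly when `s ≤ 0` and `t ≤ 0`.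
Replacing `A` by `-A` preserves the joint law, flips the sign of `s` and fixes `t`; replacing `B`
by `-B` flips the sign of `t`. Hence each of the four sign patterns of `(s, t)` has
probability `1/4`.
-/

open Set

section ConvexHull

variable {𝕜 V : Type*} [Field 𝕜] [LinearOrder 𝕜] [IsStrictOrderedRing 𝕜] [AddCommGroup V]
  [Module 𝕜 V]

theorem mem_convexHull_triple_iff {a b c x : V} :
    x ∈ convexHull 𝕜 {a, b, c} ↔ ∃ α β γ : 𝕜, 0 ≤ α ∧ 0 ≤ β ∧ 0 ≤ γ ∧ α + β + γ = 1 ∧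
      α • a + β • b + γ • c = x := by
  constructor
  · rw [convexHull_insert (insert_nonempty b {c}), convexHull_pair, mem_convexJoin]
    rintro ⟨_, rfl, _, ⟨u, v, hu, hv, huv, rfl⟩, θ, φ, hθ, hφ, hθφ, rfl⟩
    refine ⟨θ, φ * u, φ * v, hθ, mul_nonneg hφ hu, mul_nonneg hφ hv, ?_, ?_⟩
    · linear_combination hθφ + φ * huv
    · simp only [smul_add, mul_smul, add_assoc]
  · rintro ⟨α, β, γ, hα, hβ, hγ, hsum, rfl⟩
    refine mem_convexHull_of_exists_fintype ![α, β, γ] ![a, b, c] ?_ ?_ ?_ ?_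
    · simp [Fin.forall_fin_succ, hα, hβ, hγ]
    · simp [Fin.sum_univ_three, hsum]
    · simp [Fin.forall_fin_succ]
    · simp [Fin.sum_univ_three, add_assoc]

theorem zero_mem_convexHull_smul_add_smul_iff {a b : V} (hab : LinearIndependent 𝕜 ![a, b])
    (s t : 𝕜) : (0 : V) ∈ convexHull 𝕜 {a, b, s • a + t • b} ↔ s ≤ 0 ∧ t ≤ 0 := by
  rw [mem_convexHull_triple_iff]
  constructor
  · rintro ⟨α, β, γ, hα, hβ, hγ, hsum, hzero⟩
    obtain ⟨hαs, hβt⟩ := LinearIndependent.pair_iff.mp hab (α + γ * s) (β + γ * t)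
      (by rw [← hzero]; module)
    have hγ_pos : 0 < γ := by
      refine hγ.lt_of_ne fun hγ0 => ?_
      subst hγ0
      linarith
    constructor <;> nlinarith
  · rintro ⟨hs, ht⟩
    have hw : 0 < 1 - s - t := by linarith
    refine ⟨-s / (1 - s - t), -t / (1 - s - t), 1 / (1 - s - t), div_nonneg (by linarith) hw.le,
      div_nonneg (by linarith) hw.le, by positivity, by field_simp; ring, ?_⟩
    match_scalars <;> field_simp <;> ring

end ConvexHull

theorem two_mul_measure_nonpos_inter {Ω : Type*} [MeasurableSpace Ω] {μ : Measure Ω}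
    {σ : Ω → Ω} (hσ : MeasurePreserving σ μ μ) {X : Ω → ℝ} (hX : Measurable X)
    (hXσ : ∀ ω, X (σ ω) = -X ω) (hX0 : ∀ᵐ ω ∂μ, X ω ≠ 0) {S : Set Ω} (hS : MeasurableSet S)
    (hSσ : σ ⁻¹' S = S) : 2 * μ ({ω | X ω ≤ 0} ∩ S) = μ S := by
  set N := {ω | X ω ≤ 0}
  have hN : MeasurableSet N := measurableSet_le hX measurable_const
  have hflip : (S \ N : Set Ω) =ᵐ[μ] σ ⁻¹' (N ∩ S) := by
    refine Filter.eventuallyEq_set.2 ?_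
    filter_upwards [hX0] with ω hω
    simp [N, hSσ, hXσ, hω.symm.le_iff_lt, and_comm]
  rw [two_mul, ← measure_inter_add_sdiff S hN, measure_congr hflip,
    hσ.measure_preimage (hN.inter hS).nullMeasurableSet, inter_comm]

section StdGaussian

variable {E : Type*} [NormedAddCommGroup E] [InnerProductSpace ℝ E] [FiniteDimensional ℝ E]
  [MeasurableSpace E] [BorelSpace E]

theorem measurePreserving_neg_stdGaussian :
    MeasurePreserving (fun x : E => -x) (stdGaussian E) (stdGaussian E) :=
  ⟨measurable_neg, by simpa using stdGaussian_map (LinearIsometryEquiv.neg ℝ (E := E))⟩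

/-- A nonzero functional of a standard Gaussian vector is a nondegenerate real Gaussian. -/
theorem stdGaussian_preimage_singleton {L : StrongDual ℝ E} (hL : L ≠ 0) (c : ℝ) :
    stdGaussian E (L ⁻¹' {c}) = 0 := by
  have hvar : Var[L; stdGaussian E].toNNReal ≠ 0 := by
    simpa [variance_dual_stdGaussian] using hL
  have := nullSingletonClass_gaussianReal (μ := (stdGaussian E)[L]) hvar
  rw [← Measure.map_apply L.measurable (measurableSet_singleton c),
    IsGaussian.map_eq_gaussianReal, measure_singleton]

end StdGaussian

local notation "ℝ²" => EuclideanSpace ℝ (Fin 2)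

def cross (x y : ℝ²) : ℝ := x 0 * y 1 - x 1 * y 0

theorem cross_swap (x y : ℝ²) : cross y x = -cross x y := by
  simp only [cross]; ring

@[simp] theorem cross_neg_left (x y : ℝ²) : cross (-x) y = -cross x y := by
  simp only [cross, PiLp.neg_apply]; ring

@[simp] theorem cross_neg_right (x y : ℝ²) : cross x (-y) = -cross x y := by
  simp only [cross, PiLp.neg_apply]; ring

theorem measurable_cross : Measurable fun q : ℝ² × ℝ² => cross q.1 q.2 := by
  unfold cross; fun_prop

theorem linearIndependent_of_cross_ne_zero {a b : ℝ²} (h : cross a b ≠ 0) :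
    LinearIndependent ℝ ![a, b] := by
  refine LinearIndependent.pair_iff.mpr fun s t hst => ?_
  have h0 : s * a 0 + t * b 0 = 0 := by simpa using congrArg (· 0) hst
  have h1 : s * a 1 + t * b 1 = 0 := by simpa using congrArg (· 1) hst
  unfold cross at h
  constructor
  · refine (mul_eq_zero.mp ?_).resolve_right h
    linear_combination b 1 * h0 - b 0 * h1
  · refine (mul_eq_zero.mp ?_).resolve_right h
    linear_combination a 0 * h1 - a 1 * h0

-- Cramer's rule for the coordinates of `c` in the basis `(a, b)`; both are `0` when `cross a b = 0`.

noncomputable def coordFst (a b c : ℝ²) : ℝ := cross c b / cross a b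

noncomputable def coordSnd (a b c : ℝ²) : ℝ := cross a c / cross a b

theorem coordFst_smul_add_coordSnd_smul {a b : ℝ²} (h : cross a b ≠ 0) (c : ℝ²) :
    coordFst a b c • a + coordSnd a b c • b = c := by
  ext i
  simp only [PiLp.add_apply, PiLp.smul_apply, smul_eq_mul, coordFst, coordSnd]
  rw [div_mul_eq_mul_div, div_mul_eq_mul_div, ← add_div, div_eq_iff h]
  fin_cases i <;> simp [cross] <;> ring

theorem zero_mem_convexHull_iff_coord_nonpos {a b : ℝ²} (h : cross a b ≠ 0) (c : ℝ²) :
    (0 : ℝ²) ∈ convexHull ℝ {a, b, c} ↔ coordFst a b c ≤ 0 ∧ coordSnd a b c ≤ 0 := by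
  conv_lhs => rw [← coordFst_smul_add_coordSnd_smul h c]
  exact zero_mem_convexHull_smul_add_smul_iff (linearIndependent_of_cross_ne_zero h) _ _

theorem coordFst_neg_fst (a b c : ℝ²) : coordFst (-a) b c = -coordFst a b c := by
  simp [coordFst, div_neg]

theorem coordSnd_neg_fst (a b c : ℝ²) : coordSnd (-a) b c = coordSnd a b c := by
  simp [coordSnd, neg_div_neg_eq]

theorem coordSnd_neg_snd (a b c : ℝ²) : coordSnd a (-b) c = -coordSnd a b c := by
  simp [coordSnd, div_neg]

theorem measurable_coordFst : Measurable fun p : ℝ² × ℝ² × ℝ² => coordFst p.1 p.2.1 p.2.2 := by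
  unfold coordFst cross; fun_prop

theorem measurable_coordSnd : Measurable fun p : ℝ² × ℝ² × ℝ² => coordSnd p.1 p.2.1 p.2.2 := by
  unfold coordSnd cross; fun_prop

theorem stdGaussian_cross_eq_zero {a : ℝ²} (ha : a ≠ 0) :
    stdGaussian ℝ² {b | cross a b = 0} = 0 := by
  set L : StrongDual ℝ ℝ² := a 0 • EuclideanSpace.proj 1 - a 1 • EuclideanSpace.proj 0
  have hL : L ≠ 0 := by
    intro hL
    apply ha
    have h0 := congrArg (fun f : StrongDual ℝ ℝ² => f (EuclideanSpace.single 0 1)) hL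
    have h1 := congrArg (fun f : StrongDual ℝ ℝ² => f (EuclideanSpace.single 1 1)) hL
    simp [L] at h0 h1
    ext i; fin_cases i <;> simp [h0, h1]
  convert stdGaussian_preimage_singleton hL 0 using 2
  ext b; simp [L, cross]

theorem ae_cross_ne_zero_stdGaussian :
    ∀ᵐ q ∂(stdGaussian ℝ²).prod (stdGaussian ℝ²), cross q.1 q.2 ≠ 0 := by
  have hne : ∀ᵐ a ∂stdGaussian ℝ², a ≠ 0 := by
    have hproj : (EuclideanSpace.proj 0 : StrongDual ℝ ℝ²) ≠ 0 := fun h => by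
      simpa using congrArg (fun f : StrongDual ℝ ℝ² => f (EuclideanSpace.single 0 1)) h
    refine measure_mono_null (fun a ha => ?_) (stdGaussian_preimage_singleton hproj 0)
    simp_all
  have hmeas : MeasurableSet {q : ℝ² × ℝ² | cross q.1 q.2 ≠ 0} :=
    (measurableSet_eq_fun measurable_cross measurable_const).compl
  rw [Measure.ae_prod_iff_ae_ae hmeas]
  filter_upwards [hne] with a ha
  exact measure_eq_zero_iff_ae_notMem.mp (stdGaussian_cross_eq_zero ha)

section SymmetricLaw

variable {μ : Measure ℝ²} [IsProbabilityMeasure μ]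

theorem ae_cross_ne_zero_triple (hμ : ∀ᵐ q ∂μ.prod μ, cross q.1 q.2 ≠ 0) :
    ∀ᵐ p ∂μ.prod (μ.prod μ),
      cross p.1 p.2.1 ≠ 0 ∧ cross p.1 p.2.2 ≠ 0 ∧ cross p.2.1 p.2.2 ≠ 0 := by
  have hab := ((MeasurePreserving.id μ).prod
    (measurePreserving_fst (μ := μ) (ν := μ))).quasiMeasurePreserving.ae hμ
  have hac := ((MeasurePreserving.id μ).prod
    (measurePreserving_snd (μ := μ) (ν := μ))).quasiMeasurePreserving.ae hμ
  have hbc := (measurePreserving_snd (μ := μ) (ν := μ.prod μ)).quasiMeasurePreserving.ae hμ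
  filter_upwards [hab, hac, hbc] with p h₁ h₂ h₃
  exact ⟨h₁, h₂, h₃⟩

theorem measure_zero_mem_convexHull_eq (hneg : MeasurePreserving (fun x : ℝ² => -x) μ μ)
    (hμ : ∀ᵐ q ∂μ.prod μ, cross q.1 q.2 ≠ 0) :
    μ.prod (μ.prod μ) {p | (0 : ℝ²) ∈ convexHull ℝ {p.1, p.2.1, p.2.2}} = 1 / 4 := by
  set ν := μ.prod (μ.prod μ)
  have hgen := ae_cross_ne_zero_triple hμ
  set F := {p : ℝ² × ℝ² × ℝ² | coordFst p.1 p.2.1 p.2.2 ≤ 0}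
  set G := {p : ℝ² × ℝ² × ℝ² | coordSnd p.1 p.2.1 p.2.2 ≤ 0}
  have hevent : {p : ℝ² × ℝ² × ℝ² | (0 : ℝ²) ∈ convexHull ℝ {p.1, p.2.1, p.2.2}}
      =ᵐ[ν] (F ∩ G : Set _) := by
    refine Filter.eventuallyEq_set.2 ?_
    filter_upwards [hgen] with p hp
    exact zero_mem_convexHull_iff_coord_nonpos hp.1 _
  have hFst : ∀ᵐ p ∂ν, coordFst p.1 p.2.1 p.2.2 ≠ 0 := by
    filter_upwards [hgen] with p hp
    exact div_ne_zero (by rw [cross_swap]; exact neg_ne_zero.mpr hp.2.2) hp.1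
  have hSnd : ∀ᵐ p ∂ν, coordSnd p.1 p.2.1 p.2.2 ≠ 0 := by
    filter_upwards [hgen] with p hp
    exact div_ne_zero hp.2.1 hp.1
  have hF : 2 * ν (F ∩ G) = ν G :=
    two_mul_measure_nonpos_inter (hneg.prod (MeasurePreserving.id _)) measurable_coordFst
      (fun p => coordFst_neg_fst _ _ _) hFst (measurableSet_le measurable_coordSnd measurable_const)
      (by ext p; simp [G, coordSnd_neg_fst])
  have hG : 2 * ν G = 1 := by
    simpa using two_mul_measure_nonpos_inter
      ((MeasurePreserving.id _).prod (hneg.prod (MeasurePreserving.id _))) measurable_coordSnd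
      (fun p => coordSnd_neg_snd _ _ _) hSnd MeasurableSet.univ preimage_univ
  rw [measure_congr hevent, ENNReal.eq_div_iff (by norm_num) (by norm_num), ← hG, ← hF]
  ring

end SymmetricLaw

theorem capture_origin_prob :
    (stdGaussian2.prod (stdGaussian2.prod stdGaussian2))
      {p : EuclideanSpace ℝ (Fin 2) × EuclideanSpace ℝ (Fin 2) × EuclideanSpace ℝ (Fin 2) |
        (0 : EuclideanSpace ℝ (Fin 2)) ∈ convexHull ℝ {p.1, p.2.1, p.2.2}} = 1/4 := by
  rw [stdGaussian2, map_pi_eq_stdGaussian]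
  exact measure_zero_mem_convexHull_eq measurePreserving_neg_stdGaussian
    ae_cross_ne_zero_stdGaussian
end

section
/- Let a, b, x be independent standard normal random variables on ℝ. Then the median of the three values has variance 1 - √3/π; equivalently, 6·(2π)^{-3/2} ∫_ℝ ∫_ℝ ∫_{a<x<b} x² exp(-(a²+b²+x²)/2) dx db da = 1 - √3/π. -/
/-!
For three i.i.d. samples from an atomless law with distribution function `F`, ties are null,
and off the ties `g (med a b x)` is the sum over the six orderings of
`g(pivot) · 1[low < pivot < high]`. The six terms have the same law, and integrating out `low` and `high` leaves
`g(x) F(x) (1 - F(x))`; so `E g(med) = 6 ∫ g F (1 - F)`, and the triple integral of the statement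
is `(2π)^{3/2}` times one of the six terms. For the standard Gaussian (density `φ`, distribution
function `Φ`), an explicit primitive of `φ x² Φ (1 - Φ) + φ³` gives
`∫ x² Φ (1 - Φ) dγ = 1/6 - ∫ φ³ = 1/6 - √3 / (6π)`. The mean of the median vanishes because the
median is odd and the Gaussian law is symmetric.
-/

open Real MeasureTheory ProbabilityTheory

noncomputable def med (a b x : ℝ) : ℝ := a + b + x - max a (max b x) - min a (min b x)

noncomputable def μ3 : Measure (ℝ × ℝ × ℝ) :=
  (gaussianReal 0 1).prod ((gaussianReal 0 1).prod (gaussianReal 0 1))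

open Set Filter Topology

theorem MeasureTheory.MeasurePreserving.integral_comp_of_aestronglyMeasurable
    {α β : Type*} [MeasurableSpace α] [MeasurableSpace β] {μ : Measure α} {ν : Measure β}
    {f : α → β} (hf : MeasurePreserving f μ ν) {g : β → ℝ} (hg : AEStronglyMeasurable g ν) :
    ∫ x, g (f x) ∂μ = ∫ y, g y ∂ν := by
  rw [← hf.map_eq] at hg ⊢
  exact (integral_map hf.measurable.aemeasurable hg).symm

namespace MedianOfThree

section Permutations

variable {α : Type*} [MeasurableSpace α]

def rotate (p : α × α × α) : α × α × α := (p.2.1, p.2.2, p.1)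

def swapTail (p : α × α × α) : α × α × α := (p.1, p.2.2, p.2.1)

variable (ν : Measure α) [SFinite ν]

lemma measurePreserving_rotate :
    MeasurePreserving rotate (ν.prod (ν.prod ν)) (ν.prod (ν.prod ν)) :=
  (measurePreserving_prodAssoc ν ν ν).comp Measure.measurePreserving_swap

lemma measurePreserving_swapTail :
    MeasurePreserving swapTail (ν.prod (ν.prod ν)) (ν.prod (ν.prod ν)) :=
  (MeasurePreserving.id ν).prod Measure.measurePreserving_swap

end Permutations

section Median

def firstBetween : Set (ℝ × ℝ × ℝ) := {p | p.2.1 < p.1 ∧ p.1 < p.2.2}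

lemma measurableSet_firstBetween : MeasurableSet firstBetween :=
  (measurableSet_lt (by fun_prop) measurable_fst).inter
    (measurableSet_lt measurable_fst (by fun_prop))

lemma apply_med_eq_sum_indicator_firstBetween (g : ℝ → ℝ) {a b x : ℝ} (hab : a ≠ b)
    (hax : a ≠ x) (hbx : b ≠ x) :
    g (med a b x) = ∑ i : Fin 3, ∑ j : Fin 2,
      firstBetween.indicator (fun p => g p.1) (swapTail^[j] (rotate^[i] (a, b, x))) := by
  simp only [Fin.sum_univ_three, Fin.sum_univ_two, Fin.val_zero, Fin.val_one, Fin.val_two,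
    Function.iterate_zero, Function.iterate_succ, id, Function.comp, rotate, swapTail,
    firstBetween, indicator_apply, mem_ofPred_eq]
  rcases hab.lt_or_gt with h₁ | h₁ <;> rcases hax.lt_or_gt with h₂ | h₂ <;>
    rcases hbx.lt_or_gt with h₃ | h₃ <;>
    simp only [med, h₁, h₂, h₃, h₁.le, h₂.le, h₃.le, lt_asymm h₁, lt_asymm h₂, lt_asymm h₃,
      max_eq_left, max_eq_right, min_eq_left, min_eq_right, and_true, and_false, if_true,
      if_false, add_zero, zero_add] <;>
    first | (exfalso; linarith) | (congr 1; ring)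

lemma med_neg (a b x : ℝ) : med (-a) (-b) (-x) = -med a b x := by
  simp only [med, max_neg_neg, min_neg_neg]
  ring

variable (ν : Measure ℝ)

lemma ae_pairwise_ne [SFinite ν] [NullSingletonClass ν] :
    ∀ᵐ p ∂ν.prod (ν.prod ν), p.1 ≠ p.2.1 ∧ p.1 ≠ p.2.2 ∧ p.2.1 ≠ p.2.2 := by
  rw [Measure.ae_prod_iff_ae_ae (by measurability)]
  filter_upwards with a
  rw [Measure.ae_prod_iff_ae_ae (by measurability)]
  filter_upwards [ν.ae_ne a] with b hb
  filter_upwards [ν.ae_ne a, ν.ae_ne b] with x hxa hxb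
  exact ⟨hb.symm, hxa.symm, hxb.symm⟩

theorem integral_med_eq_zero [SFinite ν] [ν.IsNegInvariant] :
    ∫ p, med p.1 p.2.1 p.2.2 ∂ν.prod (ν.prod ν) = 0 := by
  have hneg : MeasurePreserving (fun p : ℝ × ℝ × ℝ => -p) (ν.prod (ν.prod ν))
      (ν.prod (ν.prod ν)) :=
    (Measure.measurePreserving_neg ν).prod
      ((Measure.measurePreserving_neg ν).prod (Measure.measurePreserving_neg ν))
  have h := hneg.integral_comp (Homeomorph.neg _).measurableEmbedding
    fun p => med p.1 p.2.1 p.2.2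
  simp only [Prod.fst_neg, Prod.snd_neg, med_neg, integral_neg] at h
  linarith

variable [IsProbabilityMeasure ν] [NullSingletonClass ν]

lemma integral_indicator_firstBetween {g : ℝ → ℝ} (hg : Integrable g ν) :
    ∫ p, firstBetween.indicator (fun p => g p.1) p ∂ν.prod (ν.prod ν)
      = ∫ x, g x * cdf ν x * (1 - cdf ν x) ∂ν := by
  rw [integral_prod _ ((hg.comp_fst _).indicator measurableSet_firstBetween)]
  congr 1 with a
  have hslice : (fun q => firstBetween.indicator (fun p => g p.1) (a, q))
      = (Iio a ×ˢ Ioi a).indicator (fun _ => g a) := by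
    ext q; simp [firstBetween, indicator_apply]
  rw [hslice, integral_indicator_const _ (measurableSet_Iio.prod measurableSet_Ioi),
    measureReal_prod_prod, measureReal_congr Iio_ae_eq_Iic, ← compl_Iic,
    probReal_compl_eq_one_sub measurableSet_Iic, ← cdf_eq_real, smul_eq_mul]
  ring

theorem integral_comp_med {g : ℝ → ℝ} (hg : Integrable g ν) :
    ∫ p, g (med p.1 p.2.1 p.2.2) ∂ν.prod (ν.prod ν)
      = 6 * ∫ x, g x * cdf ν x * (1 - cdf ν x) ∂ν := by
  set F := firstBetween.indicator (fun p : ℝ × ℝ × ℝ => g p.1)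
  have hF : Integrable F (ν.prod (ν.prod ν)) :=
    (hg.comp_fst _).indicator measurableSet_firstBetween
  have hσ (i j : ℕ) : MeasurePreserving (swapTail^[j] ∘ rotate^[i])
      (ν.prod (ν.prod ν)) (ν.prod (ν.prod ν)) :=
    ((measurePreserving_swapTail ν).iterate j).comp ((measurePreserving_rotate ν).iterate i)
  have hFσ (i j : ℕ) : Integrable (fun p => F ((swapTail^[j] ∘ rotate^[i]) p))
      (ν.prod (ν.prod ν)) :=
    (hσ i j).integrable_comp_of_integrable hF
  calc ∫ p, g (med p.1 p.2.1 p.2.2) ∂ν.prod (ν.prod ν)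
      = ∫ p, ∑ i : Fin 3, ∑ j : Fin 2, F ((swapTail^[j] ∘ rotate^[i]) p)
          ∂ν.prod (ν.prod ν) := by
        refine integral_congr_ae ?_
        filter_upwards [ae_pairwise_ne ν] with p ⟨h₁, h₂, h₃⟩
        exact apply_med_eq_sum_indicator_firstBetween g h₁ h₂ h₃
    _ = ∑ i : Fin 3, ∑ j : Fin 2, ∫ p, F p ∂ν.prod (ν.prod ν) := by
        rw [integral_finsetSum _ fun (i : Fin 3) _ =>
          integrable_finsetSum _ fun (j : Fin 2) _ => hFσ i j]
        refine Finset.sum_congr rfl fun i _ => ?_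
        rw [integral_finsetSum _ fun (j : Fin 2) _ => hFσ i j]
        exact Finset.sum_congr rfl fun j _ =>
          (hσ i j).integral_comp_of_aestronglyMeasurable hF.aestronglyMeasurable
    _ = 6 * ∫ x, g x * cdf ν x * (1 - cdf ν x) ∂ν := by
        rw [integral_indicator_firstBetween ν hg]
        simp only [Finset.sum_const, Finset.card_univ, Fintype.card_fin, nsmul_eq_mul,
          Nat.cast_ofNat]
        ring

lemma integral_integral_integral_indicator_Ioo {f : ℝ → ℝ} (hf : Integrable f ν) :
    ∫ a, ∫ b, ∫ x, (Ioo a b).indicator f x ∂ν ∂ν ∂ν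
      = ∫ x, f x * cdf ν x * (1 - cdf ν x) ∂ν := by
  have hT : (fun p : ℝ × ℝ × ℝ => (Ioo p.1 p.2.1).indicator f p.2.2)
      = firstBetween.indicator (fun p => f p.1) ∘ rotate ∘ rotate := by
    ext p
    simp only [Function.comp, rotate, firstBetween, indicator_apply, mem_Ioo, mem_ofPred_eq]
  have hrot := (measurePreserving_rotate ν).comp (measurePreserving_rotate ν)
  have hF := (hf.comp_fst (ν.prod ν)).indicator measurableSet_firstBetween
  calc ∫ a, ∫ b, ∫ x, (Ioo a b).indicator f x ∂ν ∂ν ∂ν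
      = ∫ p, (Ioo p.1 p.2.1).indicator f p.2.2 ∂ν.prod (ν.prod ν) := by
        have hTi := hT ▸ hrot.integrable_comp_of_integrable hF
        rw [integral_prod _ hTi]
        refine integral_congr_ae ?_
        filter_upwards [hTi.prod_right_ae] with a ha
        exact (integral_prod _ ha).symm
    _ = ∫ p, firstBetween.indicator (fun p => f p.1) p ∂ν.prod (ν.prod ν) := by
        rw [hT]
        exact hrot.integral_comp_of_aestronglyMeasurable hF.aestronglyMeasurable
    _ = _ := integral_indicator_firstBetween ν hf

end Median

section Gaussian

local notation "γ" => gaussianReal 0 1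
local notation "φ" => gaussianPDFReal 0 1
local notation "Φ" => cdf (gaussianReal 0 1)

instance (v : NNReal) : (gaussianReal 0 v).IsNegInvariant :=
  ⟨by simpa [Measure.neg_def] using gaussianReal_map_neg (μ := 0) (v := v)⟩

instance : NullSingletonClass γ := nullSingletonClass_gaussianReal one_ne_zero

lemma gaussianPDFReal_zero_one (x : ℝ) : φ x = (√(2 * π))⁻¹ * rexp (-x ^ 2 / 2) := by
  simp [gaussianPDFReal]

lemma integral_mul_gaussianPDFReal_zero_one (f : ℝ → ℝ) : ∫ x, φ x * f x = ∫ x, f x ∂γ :=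
  (integral_gaussianReal_eq_integral_smul one_ne_zero).symm

lemma hasDerivAt_gaussianPDFReal_zero_one (x : ℝ) : HasDerivAt φ (-x * φ x) x := by
  have h : HasDerivAt (fun y : ℝ => (√(2 * π))⁻¹ * rexp (-y ^ 2 / 2))
      ((√(2 * π))⁻¹ * (rexp (-x ^ 2 / 2) * (-(2 * x) / 2))) x := by
    simpa using (((hasDerivAt_pow 2 x).neg.div_const 2).exp).const_mul (√(2 * π))⁻¹
  rw [funext gaussianPDFReal_zero_one]
  convert h using 1
  ring

lemma cdf_gaussianReal_zero_one (x : ℝ) : Φ x = ∫ t in Iic x, φ t := by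
  rw [cdf_eq_real, measureReal_def, gaussianReal_apply_eq_integral _ one_ne_zero,
    ENNReal.toReal_ofReal (setIntegral_nonneg measurableSet_Iic
      fun t _ => gaussianPDFReal_nonneg 0 1 t)]

lemma hasDerivAt_cdf_gaussianReal_zero_one (x : ℝ) : HasDerivAt Φ (φ x) x := by
  have hφ : Continuous φ := by rw [funext gaussianPDFReal_zero_one]; fun_prop
  have hint := integrable_gaussianPDFReal 0 1
  have h : Φ = fun y => Φ 0 + ∫ t in (0 : ℝ)..y, φ t := by
    ext y
    rw [cdf_gaussianReal_zero_one, cdf_gaussianReal_zero_one,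
      ← intervalIntegral.integral_Iic_sub_Iic hint.integrableOn hint.integrableOn]
    ring
  rw [h]
  exact (intervalIntegral.integral_hasDerivAt_right hint.intervalIntegrable
    (hφ.stronglyMeasurableAtFilter _ _) hφ.continuousAt).const_add _

lemma tendsto_abs_rpow_mul_gaussianPDFReal_zero_one (s : ℝ) :
    Tendsto (fun x => |x| ^ s * φ x) (cocompact ℝ) (𝓝 0) := by
  have h := (tendsto_rpow_abs_mul_exp_neg_mul_sq_cocompact (a := 1 / 2) (by norm_num) s).const_mul
    (√(2 * π))⁻¹
  rw [mul_zero] at h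
  refine h.congr fun x => ?_
  rw [gaussianPDFReal_zero_one]
  ring_nf

lemma tendsto_mul_gaussianPDFReal_zero_one :
    Tendsto (fun x => x * φ x) (cocompact ℝ) (𝓝 0) := by
  rw [tendsto_zero_iff_norm_tendsto_zero]
  refine (tendsto_abs_rpow_mul_gaussianPDFReal_zero_one 1).congr fun x => ?_
  rw [rpow_one, norm_mul, norm_of_nonneg (gaussianPDFReal_nonneg 0 1 x), norm_eq_abs]

lemma tendsto_gaussianPDFReal_zero_one : Tendsto φ (cocompact ℝ) (𝓝 0) := by
  simpa using tendsto_abs_rpow_mul_gaussianPDFReal_zero_one 0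

lemma integrable_sq_mul_gaussianPDFReal_zero_one : Integrable fun x => x ^ 2 * φ x := by
  have h := (integrable_rpow_mul_exp_neg_mul_sq (b := 1 / 2) (by norm_num) (s := 2)
    (by norm_num)).const_mul (√(2 * π))⁻¹
  refine h.congr (Eventually.of_forall fun x => ?_)
  simp only [rpow_two, gaussianPDFReal_zero_one]
  ring_nf

lemma gaussianPDFReal_zero_one_pow_three (x : ℝ) :
    φ x ^ 3 = (√(2 * π))⁻¹ ^ 3 * rexp (-(3 / 2) * x ^ 2) := by
  rw [gaussianPDFReal_zero_one, mul_pow, ← exp_nat_mul]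
  ring_nf

lemma integral_gaussianPDFReal_zero_one_pow_three : ∫ x, φ x ^ 3 = √3 / (6 * π) := by
  simp_rw [gaussianPDFReal_zero_one_pow_three]
  rw [integral_const_mul, integral_gaussian, show π / (3 / 2) = 2 * π / 3 by ring,
    sqrt_div (by positivity), inv_pow]
  have h2π : √(2 * π) ^ 2 = 2 * π := sq_sqrt (by positivity)
  have h3 : √3 ^ 2 = 3 := sq_sqrt (by norm_num)
  field_simp
  rw [h2π, h3]
  ring

/-- Integrate `x² φ = (Φ - x φ)'` by parts against `Φ (1 - Φ)`, then `x φ² = -(φ²)' / 2` by parts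
against `1 - 2Φ`. -/
noncomputable def sqMomentPrimitive (x : ℝ) : ℝ :=
  (Φ x - x * φ x) * (Φ x * (1 - Φ x)) + 2 / 3 * Φ x ^ 3 - Φ x ^ 2 / 2
    - φ x ^ 2 * (1 - 2 * Φ x) / 2

lemma hasDerivAt_sqMomentPrimitive (x : ℝ) :
    HasDerivAt sqMomentPrimitive (φ x * (x ^ 2 * Φ x * (1 - Φ x)) + φ x ^ 3) x := by
  have hΦ := hasDerivAt_cdf_gaussianReal_zero_one x
  have hφ := hasDerivAt_gaussianPDFReal_zero_one x
  have h := ((((hΦ.sub ((hasDerivAt_id x).mul hφ)).mul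
    (hΦ.mul ((hasDerivAt_const x 1).sub hΦ))).add ((hΦ.pow 3).const_mul (2 / 3))).sub
    ((hΦ.pow 2).div_const 2)).sub
    (((hφ.pow 2).mul ((hasDerivAt_const x 1).sub (hΦ.const_mul 2))).div_const 2)
  unfold sqMomentPrimitive
  refine h.congr_deriv ?_
  simp only [id, Pi.mul_apply, Pi.sub_apply, Pi.pow_apply, Nat.cast_ofNat]
  ring

lemma tendsto_sqMomentPrimitive {l : Filter ℝ} (hl : l ≤ cocompact ℝ) {c : ℝ}
    (hc : Tendsto Φ l (𝓝 c)) :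
    Tendsto sqMomentPrimitive l (𝓝 (c * (c * (1 - c)) + 2 / 3 * c ^ 3 - c ^ 2 / 2)) := by
  have hxφ := tendsto_mul_gaussianPDFReal_zero_one.mono_left hl
  have hφ := tendsto_gaussianPDFReal_zero_one.mono_left hl
  have h1 : Tendsto (fun _ => (1 : ℝ)) l (𝓝 1) := tendsto_const_nhds
  have h := ((((hc.sub hxφ).mul (hc.mul (h1.sub hc))).add
    ((hc.pow 3).const_mul (2 / 3))).sub ((hc.pow 2).div_const 2)).sub
    (((hφ.pow 2).mul (h1.sub (hc.const_mul 2))).div_const 2)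
  unfold sqMomentPrimitive
  simpa using h

theorem integral_sq_mul_cdf_mul_one_sub_cdf_gaussianReal :
    ∫ x, x ^ 2 * Φ x * (1 - Φ x) ∂γ = 1 / 6 - √3 / (6 * π) := by
  have hΦ_bdd (x : ℝ) : ‖Φ x * (1 - Φ x)‖ ≤ 1 := by
    have h₀ := cdf_nonneg γ x
    have h₁ := cdf_le_one γ x
    rw [norm_of_nonneg (by nlinarith)]
    nlinarith
  have hint₁ : Integrable fun x => φ x * (x ^ 2 * Φ x * (1 - Φ x)) := by
    refine (integrable_sq_mul_gaussianPDFReal_zero_one.mul_bdd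
      ((monotone_cdf γ).measurable.mul
        (measurable_const.sub (monotone_cdf γ).measurable)).aestronglyMeasurable
      (Eventually.of_forall hΦ_bdd)).congr (Eventually.of_forall fun x => ?_)
    simp only [Pi.mul_apply, Pi.sub_apply]
    ring
  have hint₂ : Integrable fun x => φ x ^ 3 := by
    simp_rw [gaussianPDFReal_zero_one_pow_three]
    exact (integrable_exp_neg_mul_sq (by norm_num)).const_mul _
  have h := integral_of_hasDerivAt_of_tendsto hasDerivAt_sqMomentPrimitive (hint₁.add hint₂)
    (tendsto_sqMomentPrimitive atBot_le_cocompact (tendsto_cdf_atBot γ))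
    (tendsto_sqMomentPrimitive atTop_le_cocompact (tendsto_cdf_atTop γ))
  rw [integral_add hint₁ hint₂, integral_gaussianPDFReal_zero_one_pow_three] at h
  rw [← integral_mul_gaussianPDFReal_zero_one]
  linarith

lemma integral_integral_setIntegral_Ioo_exp :
    ∫ a : ℝ, ∫ b : ℝ, ∫ x in Ioo a b, x ^ 2 * rexp (-(a ^ 2 + b ^ 2 + x ^ 2) / 2)
      = √(2 * π) ^ 3 * ∫ a, ∫ b, ∫ x, (Ioo a b).indicator (· ^ 2) x ∂γ ∂γ ∂γ := by
  have hsplit (a b x : ℝ) : x ^ 2 * rexp (-(a ^ 2 + b ^ 2 + x ^ 2) / 2)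
      = √(2 * π) ^ 3 * (φ a * (φ b * (φ x * x ^ 2))) := by
    simp only [gaussianPDFReal_zero_one]
    rw [show -(a ^ 2 + b ^ 2 + x ^ 2) / 2 = -a ^ 2 / 2 + (-b ^ 2 / 2 + -x ^ 2 / 2) by ring,
      exp_add, exp_add]
    field_simp
  have hind (a b : ℝ) :
      ∫ x in Ioo a b, φ x * x ^ 2 = ∫ x, φ x * (Ioo a b).indicator (· ^ 2) x := by
    rw [← integral_indicator measurableSet_Ioo]
    simp_rw [indicator_mul_right _ (fun x => φ x)]
  simp_rw [hsplit, integral_const_mul, hind, integral_mul_gaussianPDFReal_zero_one]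

lemma rpow_neg_three_halves_mul_sqrt_pow_three :
    (2 * π) ^ (-(3 : ℝ) / 2) * √(2 * π) ^ 3 = 1 := by
  rw [sqrt_eq_rpow, ← rpow_natCast, ← rpow_mul (by positivity), ← rpow_add (by positivity)]
  norm_num

end Gaussian

end MedianOfThree

open MedianOfThree

theorem median_variance :
    ((∫ p : ℝ × ℝ × ℝ, (med p.1 p.2.1 p.2.2)^2 ∂μ3) -
      (∫ p : ℝ × ℝ × ℝ, med p.1 p.2.1 p.2.2 ∂μ3)^2 = 1 - Real.sqrt 3 / π)
    ∧ 6 * (2*π)^(-(3:ℝ)/2) *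
        ∫ a : ℝ, ∫ b : ℝ, ∫ x in Set.Ioo a b,
          x^2 * Real.exp (-(a^2 + b^2 + x^2)/2)
      = 1 - Real.sqrt 3 / π := by
  have hsq : Integrable (fun x : ℝ => x ^ 2) (gaussianReal 0 1) :=
    (memLp_id_gaussianReal 2).integrable_sq
  have hI := integral_sq_mul_cdf_mul_one_sub_cdf_gaussianReal
  constructor
  · rw [μ3, integral_comp_med _ hsq, integral_med_eq_zero, hI]
    ring
  · rw [integral_integral_setIntegral_Ioo_exp, integral_integral_integral_indicator_Ioo _ hsq,
      hI, mul_assoc, ← mul_assoc _ _ (_ - _), rpow_neg_three_halves_mul_sqrt_pow_three]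
    ring
end
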